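/- Let n ≥ 2, a ≥ 1, let D ⊊ ℝⁿ be a domain, and let α be an a-cone arc in D joining x and y. Then k_D(x,y) ≤ 4a·log(1 + ℓ(α)/min{d(x), d(y)}). (This is inequality (3.17).) -/

import Mathlib

open Set Metric MeasureTheory

noncomputable section

/-- Distance from a point to the boundary of `D`, i.e. to its complement. -/
def distBd {n : ℕ} (D : Set (EuclideanSpace ℝ (Fin n))) (z : EuclideanSpace ℝ (Fin n)) : ℝ :=
  infDist z Dᶜ

/-- A domain in ℝⁿ: a nonempty, open, connected, proper subset. -/
def IsProperDomain {n : ℕ} (D : Set (EuclideanSpace ℝ (Fin n))) : Prop :=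
  IsOpen D ∧ IsConnected D ∧ D ≠ univ

/-- A rectifiable arc in `D`, parametrized by arclength on `[0, len]`:
the length of the subarc between parameters `s ≤ t` is exactly `t - s`. -/
structure Arc (n : ℕ) (D : Set (EuclideanSpace ℝ (Fin n))) where
  len : ℝ
  len_nonneg : 0 ≤ len
  toFun : ℝ → EuclideanSpace ℝ (Fin n)
  injOn : InjOn toFun (Icc 0 len)
  mem : ∀ t ∈ Icc 0 len, toFun t ∈ D
  unitSpeed : ∀ s ∈ Icc 0 len, ∀ t ∈ Icc 0 len, s ≤ t →
    eVariationOn toFun (Icc s t) = ENNReal.ofReal (t - s)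

namespace Arc

variable {n : ℕ} {D : Set (EuclideanSpace ℝ (Fin n))}

/-- The arc `γ` joins `x` to `y`. -/
def Joins (γ : Arc n D) (x y : EuclideanSpace ℝ (Fin n)) : Prop :=
  γ.toFun 0 = x ∧ γ.toFun γ.len = y

/-- Quasihyperbolic length of the subarc of `γ` between parameters `u` and `v`:
`∫ |dz| / d(z)` along the (unit-speed) subarc. -/
def qhLen (γ : Arc n D) (u v : ℝ) : ℝ :=
  ∫ t in u..v, 1 / distBd D (γ.toFun t)

end Arc

/-- Quasihyperbolic distance in `D`. -/
def qhDist {n : ℕ} (D : Set (EuclideanSpace ℝ (Fin n))) (x y : EuclideanSpace ℝ (Fin n)) : ℝ :=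
  sInf { r | ∃ γ : Arc n D, γ.Joins x y ∧ r = γ.qhLen 0 γ.len }

/-- Inner (internal) distance in `D`: infimum of lengths of arcs joining the two points. -/
def innerDist {n : ℕ} (D : Set (EuclideanSpace ℝ (Fin n))) (x y : EuclideanSpace ℝ (Fin n)) : ℝ :=
  sInf { r | ∃ γ : Arc n D, γ.Joins x y ∧ r = γ.len }

namespace Arc

variable {n : ℕ} {D : Set (EuclideanSpace ℝ (Fin n))}

/-- `γ` is a quasihyperbolic geodesic: its quasihyperbolic length realizes the
quasihyperbolic distance between its endpoints. -/
def IsGeodesic (γ : Arc n D) : Prop :=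
  γ.qhLen 0 γ.len = qhDist D (γ.toFun 0) (γ.toFun γ.len)

/-- `γ` is a `c`-cone arc: `min (ℓ(γ[z₁,z]), ℓ(γ[z₂,z])) ≤ c·d(z)` for all `z ∈ γ`. -/
def IsConeArc (γ : Arc n D) (c : ℝ) : Prop :=
  ∀ t ∈ Icc 0 γ.len, min t (γ.len - t) ≤ c * distBd D (γ.toFun t)

end Arc

/-- `D` is an `a`-John domain. -/
def IsJohn {n : ℕ} (D : Set (EuclideanSpace ℝ (Fin n))) (a : ℝ) : Prop :=
  ∀ x ∈ D, ∀ y ∈ D, ∃ γ : Arc n D, γ.Joins x y ∧ γ.IsConeArc a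

/-- `D` is a `c`-uniform domain. -/
def IsUniform {n : ℕ} (D : Set (EuclideanSpace ℝ (Fin n))) (c : ℝ) : Prop :=
  ∀ x ∈ D, ∀ y ∈ D, ∃ γ : Arc n D, γ.Joins x y ∧ γ.IsConeArc c ∧ γ.len ≤ c * dist x y

/-- `f : D → D'` is an `(M,C)`-CQH homeomorphism (a homeomorphism of `D` onto `D'`
satisfying the coarse quasihyperbolic bi-Lipschitz condition). -/
def IsCQH {n : ℕ} (D D' : Set (EuclideanSpace ℝ (Fin n)))
    (f : EuclideanSpace ℝ (Fin n) → EuclideanSpace ℝ (Fin n)) (M C : ℝ) : Prop :=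
  ContinuousOn f D ∧ BijOn f D D' ∧
  ∀ x ∈ D, ∀ y ∈ D,
    (qhDist D x y - C) / M ≤ qhDist D' (f x) (f y) ∧
    qhDist D' (f x) (f y) ≤ M * qhDist D x y + C

/-! On the half `t ≤ L/2` of a unit-speed `a`-cone arc `α` of length `L` that is nearer to `x`,
the cone condition gives `t ≤ a·d(α t)` and the triangle inequality gives `d(x) ≤ d(α t) + t`,
so `1/d(α t) ≤ 2a/(t + d(x)/2)`; integrating over `[0, L/2]` bounds the quasihyperbolic length
of that half by `2a·log(1 + L/d(x))`. The other half is the same estimate for the reversed arc. -/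

lemma integral_inv_add_const {b c : ℝ} (hb : 0 ≤ b) (hc : 0 < c) :
    ∫ t in (0:ℝ)..b, (t + c)⁻¹ = Real.log (1 + b / c) := by
  rw [intervalIntegral.integral_comp_add_right (fun u => u⁻¹) c, zero_add,
    integral_inv (notMem_uIcc_of_lt hc (by linarith))]
  congr 1
  field_simp
  ring

namespace Arc

variable {n : ℕ} {D : Set (EuclideanSpace ℝ (Fin n))}

def reverse (γ : Arc n D) : Arc n D where
  len := γ.len
  len_nonneg := γ.len_nonneg
  toFun t := γ.toFun (γ.len - t)
  injOn s hs t ht hst := by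
    have hmaps : MapsTo (γ.len - ·) (Icc 0 γ.len) (Icc 0 γ.len) :=
      fun u ⟨hu₀, hu₁⟩ => ⟨by linarith, by linarith⟩
    simpa using γ.injOn (hmaps hs) (hmaps ht) hst
  mem t ht := γ.mem _ ⟨by linarith [ht.2], by linarith [ht.1]⟩
  unitSpeed s hs t ht hst := by
    have hanti : AntitoneOn (γ.len - ·) (Icc s t) := fun _ _ _ _ huv => sub_le_sub_left huv _
    rw [← Function.comp_def γ.toFun, eVariationOn.comp_eq_of_antitoneOn _ _ hanti,
      image_const_sub_Icc, γ.unitSpeed _ ⟨by linarith [ht.2], by linarith [ht.1]⟩ _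
        ⟨by linarith [hs.2], by linarith [hs.1]⟩ (by linarith)]
    congr 1
    ring

@[simp] lemma reverse_len (γ : Arc n D) : γ.reverse.len = γ.len := rfl

@[simp] lemma reverse_toFun (γ : Arc n D) (t : ℝ) : γ.reverse.toFun t = γ.toFun (γ.len - t) := rfl

lemma IsConeArc.reverse {γ : Arc n D} {c : ℝ} (h : γ.IsConeArc c) : γ.reverse.IsConeArc c := by
  intro t ⟨ht₀, ht₁⟩
  rw [reverse_len] at ht₁ ⊢
  have := h (γ.len - t) ⟨by linarith, by linarith⟩
  rw [min_comm, sub_sub_cancel] at this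
  exact this

lemma qhLen_reverse (γ : Arc n D) (u v : ℝ) :
    γ.reverse.qhLen u v = γ.qhLen (γ.len - v) (γ.len - u) :=
  intervalIntegral.integral_comp_sub_left (fun t => 1 / distBd D (γ.toFun t)) γ.len

lemma dist_le_sub (γ : Arc n D) {s t : ℝ} (hs : s ∈ Icc 0 γ.len) (ht : t ∈ Icc 0 γ.len)
    (hst : s ≤ t) : dist (γ.toFun s) (γ.toFun t) ≤ t - s := by
  have h := eVariationOn.edist_le γ.toFun (left_mem_Icc.2 hst) (right_mem_Icc.2 hst)
  rw [γ.unitSpeed s hs t ht hst, edist_dist] at h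
  exact (ENNReal.ofReal_le_ofReal_iff (by linarith)).1 h

lemma lipschitzOnWith (γ : Arc n D) : LipschitzOnWith 1 γ.toFun (Icc 0 γ.len) := by
  refine LipschitzOnWith.of_dist_le_mul fun s hs t ht => ?_
  rw [NNReal.coe_one, one_mul, Real.dist_eq]
  rcases le_total s t with hst | hts
  · rw [abs_sub_comm]
    exact (γ.dist_le_sub hs ht hst).trans (le_abs_self _)
  · rw [dist_comm]
    exact (γ.dist_le_sub ht hs hts).trans (le_abs_self _)

lemma distBd_pos (γ : Arc n D) (hD : IsOpen D) (hD' : D ≠ univ) {t : ℝ}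
    (ht : t ∈ Icc 0 γ.len) : 0 < distBd D (γ.toFun t) :=
  (hD.isClosed_compl.notMem_iff_infDist_pos (nonempty_compl.2 hD')).1
    (not_not_intro (γ.mem t ht))

lemma intervalIntegrable_one_div_distBd (γ : Arc n D) (hD : IsOpen D) (hD' : D ≠ univ)
    {u v : ℝ} (hu : u ∈ Icc 0 γ.len) (hv : v ∈ Icc 0 γ.len) :
    IntervalIntegrable (fun t => 1 / distBd D (γ.toFun t)) volume u v := by
  have hsub : uIcc u v ⊆ Icc 0 γ.len := uIcc_subset_Icc hu hv
  refine ContinuousOn.intervalIntegrable (continuousOn_const.div ?_ ?_)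
  · exact (continuous_infDist_pt Dᶜ).comp_continuousOn (γ.lipschitzOnWith.continuousOn.mono hsub)
  · exact fun t ht => (γ.distBd_pos hD hD' (hsub ht)).ne'

lemma qhLen_add_qhLen (γ : Arc n D) (hD : IsOpen D) (hD' : D ≠ univ) {u v w : ℝ}
    (hu : u ∈ Icc 0 γ.len) (hv : v ∈ Icc 0 γ.len) (hw : w ∈ Icc 0 γ.len) :
    γ.qhLen u v + γ.qhLen v w = γ.qhLen u w :=
  intervalIntegral.integral_add_adjacent_intervals
    (γ.intervalIntegrable_one_div_distBd hD hD' hu hv)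
    (γ.intervalIntegrable_one_div_distBd hD hD' hv hw)

lemma qhLen_nonneg (γ : Arc n D) : 0 ≤ γ.qhLen 0 γ.len :=
  intervalIntegral.integral_nonneg γ.len_nonneg fun _ _ => div_nonneg zero_le_one infDist_nonneg

lemma IsConeArc.one_div_distBd_le {γ : Arc n D} {c : ℝ} (hγ : γ.IsConeArc c) (hc : 1 ≤ c)
    (hD : IsOpen D) (hD' : D ≠ univ) {t : ℝ} (ht : t ∈ Icc 0 (γ.len / 2)) :
    1 / distBd D (γ.toFun t) ≤ 2 * c * (t + distBd D (γ.toFun 0) / 2)⁻¹ := by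
  have ht' : t ∈ Icc 0 γ.len := ⟨ht.1, by linarith [ht.2, γ.len_nonneg]⟩
  have hd := γ.distBd_pos hD hD' ht'
  have hcone : t ≤ c * distBd D (γ.toFun t) := by
    simpa [min_eq_left (show t ≤ γ.len - t by linarith [ht.2])] using hγ t ht'
  have hstart : distBd D (γ.toFun 0) ≤ distBd D (γ.toFun t) + t := by
    have := γ.dist_le_sub (left_mem_Icc.2 γ.len_nonneg) ht' ht.1
    rw [sub_zero] at this
    exact infDist_le_infDist_add_dist.trans (add_le_add_right this _)
  have hd₀ := γ.distBd_pos hD hD' (left_mem_Icc.2 γ.len_nonneg)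
  rw [← div_eq_mul_inv, div_le_div_iff₀ hd (by linarith [ht.1])]
  nlinarith

lemma IsConeArc.qhLen_half_le {γ : Arc n D} {c : ℝ} (hγ : γ.IsConeArc c) (hc : 1 ≤ c)
    (hD : IsOpen D) (hD' : D ≠ univ) :
    γ.qhLen 0 (γ.len / 2) ≤ 2 * c * Real.log (1 + γ.len / distBd D (γ.toFun 0)) := by
  have hL := γ.len_nonneg
  set d₀ := distBd D (γ.toFun 0)
  have hd₀ : 0 < d₀ := γ.distBd_pos hD hD' (left_mem_Icc.2 hL)
  have hcont : ContinuousOn (fun t => 2 * c * (t + d₀ / 2)⁻¹) (uIcc 0 (γ.len / 2)) := by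
    rw [uIcc_of_le (by linarith)]
    exact continuousOn_const.mul <| (continuousOn_id.add continuousOn_const).inv₀
      fun t ht => (show 0 < t + d₀ / 2 by linarith [ht.1]).ne'
  calc γ.qhLen 0 (γ.len / 2)
      ≤ ∫ t in (0:ℝ)..γ.len / 2, 2 * c * (t + d₀ / 2)⁻¹ :=
        intervalIntegral.integral_mono_on (by linarith)
          (γ.intervalIntegrable_one_div_distBd hD hD' (left_mem_Icc.2 hL) ⟨by linarith, by linarith⟩)
          hcont.intervalIntegrable (fun t ht => hγ.one_div_distBd_le hc hD hD' ht)
    _ = 2 * c * Real.log (1 + γ.len / d₀) := by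
        rw [intervalIntegral.integral_const_mul, integral_inv_add_const (by linarith) (by linarith)]
        congr 3
        field_simp

lemma IsConeArc.qhLen_le {γ : Arc n D} {c : ℝ} (hγ : γ.IsConeArc c) (hc : 1 ≤ c)
    (hD : IsOpen D) (hD' : D ≠ univ) :
    γ.qhLen 0 γ.len ≤ 4 * c * Real.log (1 + γ.len /
      min (distBd D (γ.toFun 0)) (distBd D (γ.toFun γ.len))) := by
  have hL := γ.len_nonneg
  have hmid : γ.len / 2 ∈ Icc 0 γ.len := ⟨by linarith, by linarith⟩
  have hfirst := hγ.qhLen_half_le hc hD hD'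
  have hsecond : γ.qhLen (γ.len / 2) γ.len ≤
      2 * c * Real.log (1 + γ.len / distBd D (γ.toFun γ.len)) := by
    simpa [qhLen_reverse, sub_half] using hγ.reverse.qhLen_half_le hc hD hD'
  set d₀ := distBd D (γ.toFun 0)
  set d₁ := distBd D (γ.toFun γ.len)
  have hd₀ : 0 < d₀ := γ.distBd_pos hD hD' (left_mem_Icc.2 hL)
  have hd₁ : 0 < d₁ := γ.distBd_pos hD hD' (right_mem_Icc.2 hL)
  have hlog₀ : Real.log (1 + γ.len / d₀) ≤ Real.log (1 + γ.len / min d₀ d₁) := by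
    gcongr
    exact min_le_left _ _
  have hlog₁ : Real.log (1 + γ.len / d₁) ≤ Real.log (1 + γ.len / min d₀ d₁) := by
    gcongr
    exact min_le_right _ _
  rw [← γ.qhLen_add_qhLen hD hD' (left_mem_Icc.2 hL) hmid (right_mem_Icc.2 hL)]
  have hc₀ : 0 ≤ 2 * c := by linarith
  linarith [mul_le_mul_of_nonneg_left hlog₀ hc₀, mul_le_mul_of_nonneg_left hlog₁ hc₀]

end Arc

lemma qhDist_le_qhLen {n : ℕ} {D : Set (EuclideanSpace ℝ (Fin n))} {x y : EuclideanSpace ℝ (Fin n)}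
    {γ : Arc n D} (h : γ.Joins x y) : qhDist D x y ≤ γ.qhLen 0 γ.len :=
  csInf_le ⟨0, fun _ ⟨γ', _, hr⟩ => hr ▸ γ'.qhLen_nonneg⟩ ⟨γ, h, rfl⟩

theorem ineq_3_17_general (n : ℕ) (a : ℝ) (ha : 1 ≤ a)
    (D : Set (EuclideanSpace ℝ (Fin n))) (hD : IsProperDomain D)
    (α : Arc n D) (x y : EuclideanSpace ℝ (Fin n)) (hxy : α.Joins x y)
    (hcone : α.IsConeArc a) :
    qhDist D x y ≤ 4 * a * Real.log (1 + α.len / min (distBd D x) (distBd D y)) := by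
  obtain ⟨rfl, rfl⟩ := hxy
  exact (qhDist_le_qhLen ⟨rfl, rfl⟩).trans (hcone.qhLen_le ha hD.1 hD.2.2)

/-- **Inequality (3.17).** Let `D ⊊ ℝⁿ` (`n ≥ 2`) be a domain and `α` an `a`-cone arc
(`a ≥ 1`) joining `x` and `y` in `D`.  Then
`k_D(x,y) ≤ 4a·log(1 + ℓ(α)/min{d(x),d(y)})`. -/
theorem ineq_3_17 (n : ℕ) (hn : 2 ≤ n) (a : ℝ) (ha : 1 ≤ a)
    (D : Set (EuclideanSpace ℝ (Fin n))) (hD : IsProperDomain D)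
    (α : Arc n D) (x y : EuclideanSpace ℝ (Fin n)) (hxy : α.Joins x y)
    (hcone : α.IsConeArc a) :
    qhDist D x y ≤ 4 * a * Real.log (1 + α.len / min (distBd D x) (distBd D y)) :=
  ineq_3_17_general n a ha D hD α x y hxy hcone
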